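/- There exist EESs E and F that are step trace equivalent but not interleaving bisimilar. Concretely, E with events a_1, a_2 labelled a and b_1, b_2 labelled b, causality a_1 < b_1, a_1 < b_2, a_2 < b_2; and F with events a_1', a_2' labelled a and b_1', b_2' labelled b, causality a_1' < b_1', a_2' < b_2', satisfy E ≈_st F but E ≉_ib F. -/

import Mathlib

/-- A labelled prime event structure over alphabet `A`. -/
structure PES (A : Type*) where
  E : Type*
  le : E → E → Prop
  conflict : E → E → Prop
  lab : E → A
  le_refl : ∀ e, le e e
  le_trans : ∀ e e' e'', le e e' → le e' e'' → le e e''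
  le_antisymm : ∀ e e', le e e' → le e' e → e = e'
  finite_past : ∀ e, Set.Finite {e' | le e' e ∧ e' ≠ e}
  conflict_irrefl : ∀ e, ¬ conflict e e
  conflict_symm : ∀ e e', conflict e e' → conflict e' e
  conflict_inherit : ∀ e e' e'', le e e' → e ≠ e' → conflict e e'' → conflict e' e''

namespace PES

variable {A : Type*}

/-- A coherence space: a PES with empty (strict) causality. -/
def IsCS (P : PES A) : Prop := ∀ e e', P.le e e' → e = e'

/-- An elementary event structure: a PES with empty conflict. -/
def IsEES (P : PES A) : Prop := ∀ e e', ¬ P.conflict e e'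

/-- Concurrency. -/
def co (P : PES A) (e e' : P.E) : Prop :=
  ¬ P.le e e' ∧ ¬ P.le e' e ∧ ¬ P.conflict e e'

/-- Configurations: finite, conflict-free, downward-closed sets of events. -/
def Config (P : PES A) (X : Set P.E) : Prop :=
  X.Finite ∧ (∀ e ∈ X, ∀ e' ∈ X, ¬ P.conflict e e') ∧
    (∀ e ∈ X, ∀ e', P.le e' e → e' ∈ X)

/-- Single-event labelled transition between configurations. -/
def Trans (P : PES A) (X : Set P.E) (a : A) (X' : Set P.E) : Prop :=
  P.Config X ∧ P.Config X' ∧ ∃ e, e ∉ X ∧ X' = insert e X ∧ P.lab e = a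

/-- `X` can perform the sequential trace `w`. -/
def TraceFrom (P : PES A) : Set P.E → List A → Prop
  | X, [] => P.Config X
  | X, a :: w => ∃ X', P.Trans X a X' ∧ P.TraceFrom X' w

/-- Sequential traces of a PES. -/
def STr (P : PES A) (w : List A) : Prop := P.TraceFrom ∅ w

/-- Interleaving trace equivalence. -/
def ITrEq (P Q : PES A) : Prop := ∀ w : List A, P.STr w ↔ Q.STr w

/-- Interleaving bisimulation. -/
def IBisim (P Q : PES A) (R : Set P.E → Set Q.E → Prop) : Prop :=
  R ∅ ∅ ∧ ∀ X Y, R X Y →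
    (∀ a X', P.Trans X a X' → ∃ Y', Q.Trans Y a Y' ∧ R X' Y') ∧
    (∀ a Y', Q.Trans Y a Y' → ∃ X', P.Trans X a X' ∧ R X' Y')

/-- Interleaving bisimilarity. -/
def IBisimilar (P Q : PES A) : Prop := ∃ R, IBisim P Q R

/-- Step transition, labelled by the multiset of labels of a nonempty set of
pairwise concurrent events added at once. -/
def StepTrans (P : PES A) (X : Set P.E) (m : Multiset A) (X' : Set P.E) : Prop :=
  P.Config X ∧ P.Config X' ∧ X ⊆ X' ∧ ∃ G : Finset P.E, ↑G = X' \ X ∧ G.Nonempty ∧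
    (∀ e ∈ G, ∀ e' ∈ G, e ≠ e' → P.co e e') ∧ Multiset.map P.lab G.val = m

/-- `X` can perform the step trace `s`. -/
def StepTraceFrom (P : PES A) : Set P.E → List (Multiset A) → Prop
  | X, [] => P.Config X
  | X, m :: s => ∃ X', P.StepTrans X m X' ∧ P.StepTraceFrom X' s

/-- Step traces of a PES. -/
def StTr (P : PES A) (s : List (Multiset A)) : Prop := P.StepTraceFrom ∅ s

/-- Step trace equivalence. -/
def STrEq (P Q : PES A) : Prop := ∀ s : List (Multiset A), P.StTr s ↔ Q.StTr s

/-- Step bisimulation. -/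
def SBisim (P Q : PES A) (R : Set P.E → Set Q.E → Prop) : Prop :=
  R ∅ ∅ ∧ ∀ X Y, R X Y →
    (∀ m X', P.StepTrans X m X' → ∃ Y', Q.StepTrans Y m Y' ∧ R X' Y') ∧
    (∀ m Y', Q.StepTrans Y m Y' → ∃ X', P.StepTrans X m X' ∧ R X' Y')

/-- Step bisimilarity. -/
def SBisimilar (P Q : PES A) : Prop := ∃ R, SBisim P Q R

/-- `f` restricts to a label-preserving order-isomorphism from `X` onto `Y`. -/
def IsoOn (P Q : PES A) (f : P.E → Q.E) (X : Set P.E) (Y : Set Q.E) : Prop :=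
  Set.BijOn f X Y ∧ (∀ e ∈ X, ∀ e' ∈ X, (P.le e e' ↔ Q.le (f e) (f e'))) ∧
    ∀ e ∈ X, Q.lab (f e) = P.lab e

/-- The labelled posets induced by `X` and `Y` are isomorphic (same pomset). -/
def PIso (P Q : PES A) (X : Set P.E) (Y : Set Q.E) : Prop :=
  ∃ f, IsoOn P Q f X Y

/-- Pomset trace equivalence: same sets of pomsets of configurations. -/
def PTrEq (P Q : PES A) : Prop :=
  (∀ X, P.Config X → ∃ Y, Q.Config Y ∧ PIso P Q X Y) ∧
  (∀ Y, Q.Config Y → ∃ X, P.Config X ∧ PIso P Q X Y)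

/-- Pomset transition: strictly extending a configuration. -/
def PomTrans (P : PES A) (X X' : Set P.E) : Prop :=
  P.Config X ∧ P.Config X' ∧ X ⊂ X'

/-- Pomset bisimulation: matched extensions must add isomorphic pomsets. -/
def PBisim (P Q : PES A) (R : Set P.E → Set Q.E → Prop) : Prop :=
  R ∅ ∅ ∧ ∀ X Y, R X Y →
    (∀ X', P.PomTrans X X' →
      ∃ Y', Q.PomTrans Y Y' ∧ PIso P Q (X' \ X) (Y' \ Y) ∧ R X' Y') ∧
    (∀ Y', Q.PomTrans Y Y' →
      ∃ X', P.PomTrans X X' ∧ PIso P Q (X' \ X) (Y' \ Y) ∧ R X' Y')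

/-- Pomset bisimilarity. -/
def PBisimilar (P Q : PES A) : Prop := ∃ R, PBisim P Q R

/-- Weak history preserving bisimulation. -/
def WHBisim (P Q : PES A) (R : Set P.E → Set Q.E → Prop) : Prop :=
  R ∅ ∅ ∧ ∀ X Y, R X Y → PIso P Q X Y ∧
    (∀ a X', P.Trans X a X' → ∃ Y', Q.Trans Y a Y' ∧ R X' Y') ∧
    (∀ a Y', Q.Trans Y a Y' → ∃ X', P.Trans X a X' ∧ R X' Y')

/-- Weak history preserving bisimilarity. -/
def WHBisimilar (P Q : PES A) : Prop := ∃ R, WHBisim P Q R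

/-- History preserving bisimulation: triples `(X, Y, f)`. -/
def HBisim (P Q : PES A) (R : Set P.E → Set Q.E → (P.E → Q.E) → Prop) : Prop :=
  (∃ f, R ∅ ∅ f) ∧ ∀ X Y f, R X Y f → IsoOn P Q f X Y ∧
    (∀ a X', P.Trans X a X' →
      ∃ Y' f', Q.Trans Y a Y' ∧ R X' Y' f' ∧ ∀ e ∈ X, f' e = f e) ∧
    (∀ a Y', Q.Trans Y a Y' →
      ∃ X' f', P.Trans X a X' ∧ R X' Y' f' ∧ ∀ e ∈ X, f' e = f e)

/-- History preserving bisimilarity. -/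
def HBisimilar (P Q : PES A) : Prop := ∃ R, HBisim P Q R

/-- Closure under backward transitions, as needed for hereditary hp-bisimulations. -/
def Hereditary (P Q : PES A) (R : Set P.E → Set Q.E → (P.E → Q.E) → Prop) : Prop :=
  ∀ X Y f, R X Y f →
    (∀ a X', P.Trans X' a X → R X' (f '' X') f) ∧
    (∀ a Y', Q.Trans Y' a Y → R {e ∈ X | f e ∈ Y'} Y' f)

/-- Hereditary history preserving bisimilarity. -/
def HHBisimilar (P Q : PES A) : Prop := ∃ R, HBisim P Q R ∧ Hereditary P Q R

/-- Isomorphism of PESs. -/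
def Iso (P Q : PES A) : Prop :=
  ∃ f : P.E ≃ Q.E, (∀ e e', P.le e e' ↔ Q.le (f e) (f e')) ∧
    (∀ e e', P.conflict e e' ↔ Q.conflict (f e) (f e')) ∧
    ∀ e, Q.lab (f e) = P.lab e

end PES


/-- `a := true`, `b := false`. Events `0,1` labelled `a`, events `2,3` labelled `b`;
causality `0 < 2`, `0 < 3`, `1 < 3`. -/
def eesE13 : PES Bool where
  E := Fin 4
  le i j := i = j ∨ (i = 0 ∧ j = 2) ∨ (i = 0 ∧ j = 3) ∨ (i = 1 ∧ j = 3)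
  conflict _ _ := False
  lab i := decide (i.val < 2)
  le_refl _ := Or.inl rfl
  le_trans := by decide
  le_antisymm := by decide
  finite_past _ := Set.toFinite _
  conflict_irrefl _ h := h
  conflict_symm _ _ h := h
  conflict_inherit _ _ _ _ _ h := h

/-- Events `0,1` labelled `a`, events `2,3` labelled `b`; causality `0 < 2`, `1 < 3`. -/
def eesF13 : PES Bool where
  E := Fin 4
  le i j := i = j ∨ (i = 0 ∧ j = 2) ∨ (i = 1 ∧ j = 3)
  conflict _ _ := False
  lab i := decide (i.val < 2)
  le_refl _ := Or.inl rfl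
  le_trans := by decide
  le_antisymm := by decide
  finite_past _ := Set.toFinite _
  conflict_irrefl _ h := h
  conflict_symm _ _ h := h
  conflict_inherit _ _ _ _ _ h := h


/-!
Step traces: matching a configuration by any configuration of the other structure with the same
multiset of labels is a step simulation from `E` to `F`, and from `F` to `E` once the configuration
`{a₂}` of `E` (event `1` of `eesE13`), which enables no `b`, is excluded.

Interleaving bisimulation fails because `E` can answer an `a` by `{a₂}`, from which no `b` is
possible, whereas every `a`-move of `F` enables a `b`.
-/

namespace PES

variable {A : Type*} {P Q : PES A}

theorem config_empty (P : PES A) : P.Config ∅ :=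
  ⟨Set.finite_empty, by simp, by simp⟩

def IsStepSimulation (P Q : PES A) (R : Set P.E → Set Q.E → Prop) : Prop :=
  ∀ X Y, R X Y → ∀ m X', P.StepTrans X m X' → ∃ Y', Q.StepTrans Y m Y' ∧ R X' Y'

theorem IsStepSimulation.stepTraceFrom {R : Set P.E → Set Q.E → Prop}
    (hR : IsStepSimulation P Q R) :
    ∀ (s : List (Multiset A)) {X Y}, R X Y → Q.Config Y →
      P.StepTraceFrom X s → Q.StepTraceFrom Y s
  | [], _, _, _, hY, _ => hY
  | m :: s, X, Y, hXY, _, ⟨X', hX', hs⟩ =>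
    let ⟨Y', hY', hXY'⟩ := hR X Y hXY m X' hX'
    ⟨Y', hY', hR.stepTraceFrom s hXY' hY'.2.1 hs⟩

theorem IsStepSimulation.stTr {R : Set P.E → Set Q.E → Prop} (hR : IsStepSimulation P Q R)
    (h0 : R ∅ ∅) {s : List (Multiset A)} (hs : P.StTr s) : Q.StTr s :=
  hR.stepTraceFrom s h0 Q.config_empty hs

theorem not_iBisimilar_of_stuck {a b : A} {X : Set P.E} (hX : P.Trans ∅ a X)
    (hstuck : ∀ X', ¬ P.Trans X b X') (hQ : ∀ Y, Q.Trans ∅ a Y → ∃ Y', Q.Trans Y b Y') :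
    ¬ P.IBisimilar Q := by
  rintro ⟨R, h0, hR⟩
  obtain ⟨Y, hY, hXY⟩ := (hR _ _ h0).1 a X hX
  obtain ⟨Y', hY'⟩ := hQ Y hY
  obtain ⟨X', hX', -⟩ := (hR _ _ hXY).2 b Y' hY'
  exact hstuck X' hX'

section Finset

variable (P)

theorem config_coe_iff (F : Finset P.E) :
    P.Config ↑F ↔
      (∀ e ∈ F, ∀ e' ∈ F, ¬ P.conflict e e') ∧ ∀ e ∈ F, ∀ e', P.le e' e → e' ∈ F := by
  simp [Config, F.finite_toSet]

variable [DecidableEq P.E]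

theorem trans_coe_iff (F F' : Finset P.E) (a : A) :
    P.Trans ↑F a ↑F' ↔
      P.Config ↑F ∧ P.Config ↑F' ∧ ∃ e ∉ F, F' = insert e F ∧ P.lab e = a := by
  simp only [Trans, ← Finset.coe_insert, Finset.coe_inj, Finset.mem_coe]

theorem stepTrans_coe_iff (F F' : Finset P.E) (m : Multiset A) :
    P.StepTrans ↑F m ↑F' ↔ P.Config ↑F ∧ P.Config ↑F' ∧ F ⊆ F' ∧ (F' \ F).Nonempty ∧
      (∀ e ∈ F' \ F, ∀ e' ∈ F' \ F, e ≠ e' → P.co e e') ∧ (F' \ F).val.map P.lab = m := by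
  simp only [StepTrans, Finset.coe_subset, ← Finset.coe_sdiff, Finset.coe_inj, exists_eq_left]

variable [Fintype P.E] [DecidableRel P.le] [DecidableRel P.conflict]

instance (e e' : P.E) : Decidable (P.co e e') :=
  inferInstanceAs (Decidable (¬ _ ∧ ¬ _ ∧ ¬ _))

instance (F : Finset P.E) : Decidable (P.Config ↑F) :=
  decidable_of_iff _ (P.config_coe_iff F).symm

instance [DecidableEq A] (F F' : Finset P.E) (a : A) : Decidable (P.Trans ↑F a ↑F') :=
  decidable_of_iff _ (P.trans_coe_iff F F' a).symm

instance [DecidableEq A] (F F' : Finset P.E) (m : Multiset A) :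
    Decidable (P.StepTrans ↑F m ↑F') :=
  decidable_of_iff _ (P.stepTrans_coe_iff F F' m).symm

end Finset

theorem forall_trans_coe_iff {X : Set P.E} {a : A} {p : Set P.E → Prop} :
    (∀ X', P.Trans X a X' → p X') ↔ ∀ F' : Finset P.E, P.Trans X a ↑F' → p ↑F' := by
  refine ⟨fun h F' => h F', fun h X' hX' => ?_⟩
  obtain ⟨F', rfl⟩ := hX'.2.1.1.exists_finset_coe
  exact h F' hX'

theorem stTr_of_finset_simulation [DecidableEq P.E] (R : Finset P.E → Finset Q.E → Prop)
    (h0 : R ∅ ∅)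
    (hsim : ∀ F G F', R F G → P.StepTrans ↑F ((F' \ F).val.map P.lab) ↑F' →
      ∃ G' : Finset Q.E, Q.StepTrans ↑G ((F' \ F).val.map P.lab) ↑G' ∧ R F' G')
    {s : List (Multiset A)} (hs : P.StTr s) : Q.StTr s := by
  refine IsStepSimulation.stTr
    (R := fun X Y => ∃ (F : Finset P.E) (G : Finset Q.E), ↑F = X ∧ ↑G = Y ∧ R F G) ?_
    ⟨∅, ∅, Finset.coe_empty, Finset.coe_empty, h0⟩ hs
  rintro _ _ ⟨F, G, rfl, rfl, hFG⟩ m X' hstep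
  obtain ⟨F', rfl⟩ := hstep.2.1.1.exists_finset_coe
  obtain rfl := ((P.stepTrans_coe_iff F F' m).1 hstep).2.2.2.2.2
  obtain ⟨G', hG', hFG'⟩ := hsim F G F' hFG hstep
  exact ⟨G', hG', F', G', rfl, rfl, hFG'⟩

def LabelMatch (P Q : PES A) (F : Finset P.E) (G : Finset Q.E) : Prop :=
  Q.Config ↑G ∧ F.val.map P.lab = G.val.map Q.lab

instance [Fintype Q.E] [DecidableEq Q.E] [DecidableRel Q.le] [DecidableRel Q.conflict]
    [DecidableEq A] (F : Finset P.E) (G : Finset Q.E) : Decidable (LabelMatch P Q F G) :=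
  inferInstanceAs (Decidable (_ ∧ _))

end PES

instance : Fintype eesE13.E := inferInstanceAs (Fintype (Fin 4))
instance : DecidableEq eesE13.E := inferInstanceAs (DecidableEq (Fin 4))
instance (n : ℕ) : OfNat eesE13.E n := inferInstanceAs (OfNat (Fin 4) n)
instance : DecidableRel eesE13.le := fun (_ _ : Fin 4) => by dsimp only [eesE13]; infer_instance
instance : DecidableRel eesE13.conflict := fun (_ _ : Fin 4) => by
  dsimp only [eesE13]; infer_instance

instance : Fintype eesF13.E := inferInstanceAs (Fintype (Fin 4))
instance : DecidableEq eesF13.E := inferInstanceAs (DecidableEq (Fin 4))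
instance : DecidableRel eesF13.le := fun (_ _ : Fin 4) => by dsimp only [eesF13]; infer_instance
instance : DecidableRel eesF13.conflict := fun (_ _ : Fin 4) => by
  dsimp only [eesF13]; infer_instance

theorem eesE13_stepSimulation (F : Finset eesE13.E) (G : Finset eesF13.E)
    (F' : Finset eesE13.E) :
    PES.LabelMatch eesE13 eesF13 F G →
    eesE13.StepTrans ↑F ((F' \ F).val.map eesE13.lab) ↑F' →
      ∃ G' : Finset eesF13.E, eesF13.StepTrans ↑G ((F' \ F).val.map eesE13.lab) ↑G' ∧
        PES.LabelMatch eesE13 eesF13 F' G' := by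
  revert F G F'
  decide

theorem eesF13_stepSimulation (F : Finset eesF13.E) (G : Finset eesE13.E)
    (F' : Finset eesF13.E) :
    PES.LabelMatch eesF13 eesE13 F G ∧ G ≠ {1} →
    eesF13.StepTrans ↑F ((F' \ F).val.map eesF13.lab) ↑F' →
      ∃ G' : Finset eesE13.E, eesE13.StepTrans ↑G ((F' \ F).val.map eesF13.lab) ↑G' ∧
        PES.LabelMatch eesF13 eesE13 F' G' ∧ G' ≠ {1} := by
  revert F G F'
  decide

theorem eesE13_trans_a₂ : eesE13.Trans ∅ true ↑({1} : Finset eesE13.E) := by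
  rw [← Finset.coe_empty]
  decide

theorem eesE13_a₂_stuck : ∀ X', ¬ eesE13.Trans ↑({1} : Finset eesE13.E) false X' :=
  PES.forall_trans_coe_iff.2 (by decide)

theorem eesF13_trans_a_enables_b :
    ∀ Y, eesF13.Trans ∅ true Y → ∃ Y', eesF13.Trans Y false Y' := by
  have key : ∀ G : Finset eesF13.E, eesF13.Trans ↑(∅ : Finset eesF13.E) true ↑G →
      ∃ G' : Finset eesF13.E, eesF13.Trans ↑G false ↑G' := by
    decide
  rw [← Finset.coe_empty, PES.forall_trans_coe_iff]
  intro G hG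
  obtain ⟨G', hG'⟩ := key G hG
  exact ⟨G', hG'⟩

theorem ees_st_not_ib :
    PES.STrEq eesE13 eesF13 ∧ ¬ PES.IBisimilar eesE13 eesF13 :=
  ⟨fun _ => ⟨PES.stTr_of_finset_simulation _ (by decide) eesE13_stepSimulation,
      PES.stTr_of_finset_simulation _ (by decide) eesF13_stepSimulation⟩,
    PES.not_iBisimilar_of_stuck eesE13_trans_a₂ eesE13_a₂_stuck eesF13_trans_a_enables_b⟩
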